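/- Necessity via a single best channel: if the WNCS is mean-square stabilizable then for every unstable plant i (ρ(A_i) ≥ 1), ρ(A_i)² · max( min_m ξ̄ˢ_{m,i}, min_m ξ̄ᶜ_{m,i} ) < 1 is required, given the classical single-link result that a scalar-reduced system x_{k+1}=A x_k over an i.i.d. erasure channel with erasure probability p is mean-square stabilizable iff ρ(A)²·p < 1. Formally: if limsup (1/K)Σ E[‖x_k‖²] < ∞ for a system that, with probability p per slot independently, evolves open-loop as x_{k+1} = A x_k + w_k (erasure), and is reset optimally otherwise, then ρ(A)²·p < 1 provided Q_w ≻ 0. -/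

import Mathlib

/-!
Write `f M = p • (A M Aᵀ)`. Unrolling `P (k+1) ⪰ f (P k) + p • Q_w` from `P 0 ⪰ 0`
gives `P k ⪰ ∑_{j<k} f^j (p • Q_w)`. If `ρ(A)² p ≥ 1`, each summand has trace at least
`c p / n`, where `c • 1 ≤ Q_w`: indeed `tr (A^j Q_w (A^j)ᵀ) ≥ c ‖A^j‖_F²` and
`ρ(A)^j ≤ ‖A^j‖_F ‖1‖_F = √n ‖A^j‖_F`. So `tr P k` grows linearly in `k` and its Cesàro
averages are unbounded.
-/

open Matrix Filter Finset
open scoped MatrixOrder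

lemma sum_range_iterate_le {M : Type*} [AddCommMonoid M] [PartialOrder M]
    [IsOrderedAddMonoid M] (f : M →+ M) (hf : Monotone f) {x : ℕ → M} {q : M}
    (h0 : 0 ≤ x 0) (hx : ∀ k, f (x k) + q ≤ x (k + 1)) (k : ℕ) :
    ∑ j ∈ range k, f^[j] q ≤ x k := by
  induction k with
  | zero => simpa using h0
  | succ k ih =>
    calc ∑ j ∈ range (k + 1), f^[j] q = f (∑ j ∈ range k, f^[j] q) + q := by
          simp only [sum_range_succ', Function.iterate_succ_apply', map_sum,
            Function.iterate_zero_apply]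
      _ ≤ f (x k) + q := by gcongr; exact hf ih
      _ ≤ x (k + 1) := hx k

lemma tendsto_average_atTop_of_linear_le {u : ℕ → ℝ} {e : ℝ} (he : 0 < e)
    (hu : ∀ k, e * k ≤ u k) :
    Tendsto (fun K : ℕ => (1 / (K : ℝ)) * ∑ k ∈ range K, u k) atTop atTop := by
  have gauss (K : ℕ) : ∑ k ∈ range K, (k : ℝ) = K * (K - 1) / 2 := by
    induction K with
    | zero => simp
    | succ K ih => rw [sum_range_succ, ih]; push_cast; ring
  have hlow (K : ℕ) (hK : 1 ≤ K) :
      e * ((K : ℝ) - 1) / 2 ≤ (1 / (K : ℝ)) * ∑ k ∈ range K, u k := by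
    have hK' : (0 : ℝ) < K := by exact_mod_cast hK
    calc e * ((K : ℝ) - 1) / 2 = (1 / (K : ℝ)) * ∑ k ∈ range K, e * k := by
          rw [← mul_sum, gauss]; field_simp
      _ ≤ _ := by gcongr with k; exact hu k
  refine tendsto_atTop_mono' atTop ((eventually_ge_atTop 1).mono hlow) ?_
  have hlin : Tendsto (fun K : ℕ => (K : ℝ) + -1) atTop atTop :=
    tendsto_atTop_add_const_right _ _ tendsto_natCast_atTop_atTop
  exact ((hlin.const_mul_atTop he).atTop_div_const two_pos).congr fun K => by ring

namespace Matrix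

variable {ι : Type*} [Fintype ι]

lemma trace_mono {X Y : Matrix ι ι ℝ} (h : X ≤ Y) : X.trace ≤ Y.trace :=
  (tracePositiveLinearMap ι ℝ ℝ).monotone h

lemma mul_mul_transpose_mono (A : Matrix ι ι ℝ) {M N : Matrix ι ι ℝ} (h : M ≤ N) :
    A * M * Aᵀ ≤ A * N * Aᵀ := by
  simpa [star_eq_conjTranspose] using star_right_conjugate_le_conjugate h A

lemma exists_pos_smul_one_le_of_posDef [DecidableEq ι] [Nonempty ι] {Q : Matrix ι ι ℝ}
    (hQ : Q.PosDef) : ∃ c : ℝ, 0 < c ∧ c • (1 : Matrix ι ι ℝ) ≤ Q := by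
  simpa [Algebra.algebraMap_eq_smul_one] using
    (CFC.exists_pos_algebraMap_le_iff hQ.isHermitian).2
      fun x hx => hQ.isStrictlyPositive.spectrum_pos hx

lemma mul_trace_mul_transpose_le [DecidableEq ι] {c : ℝ} {Q : Matrix ι ι ℝ}
    (hQ : c • 1 ≤ Q) (B : Matrix ι ι ℝ) :
    c * (B * Bᵀ).trace ≤ (B * Q * Bᵀ).trace := by
  simpa [trace_smul] using trace_mono (mul_mul_transpose_mono B hQ)

def lyapunovMap (p : ℝ) (A : Matrix ι ι ℝ) : Matrix ι ι ℝ →+ Matrix ι ι ℝ where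
  toFun M := p • (A * M * Aᵀ)
  map_zero' := by simp
  map_add' M N := by simp [Matrix.mul_add, Matrix.add_mul, smul_add]

lemma lyapunovMap_apply (p : ℝ) (A M : Matrix ι ι ℝ) :
    lyapunovMap p A M = p • (A * M * Aᵀ) := rfl

lemma lyapunovMap_monotone {p : ℝ} (hp : 0 ≤ p) (A : Matrix ι ι ℝ) :
    Monotone (lyapunovMap p A) := fun _ _ h =>
  smul_le_smul_of_nonneg_left (mul_mul_transpose_mono A h) hp

lemma lyapunovMap_iterate [DecidableEq ι] (p : ℝ) (A M : Matrix ι ι ℝ) (j : ℕ) :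
    (lyapunovMap p A)^[j] M = p ^ j • (A ^ j * M * (A ^ j)ᵀ) := by
  induction j with
  | zero => simp
  | succ j ih =>
    rw [Function.iterate_succ_apply', ih, lyapunovMap_apply, pow_succ, pow_succ', transpose_mul]
    simp only [Matrix.mul_smul, Matrix.smul_mul, smul_smul, Matrix.mul_assoc, mul_comm p]

section Frobenius

attribute [local instance] frobeniusNormedAddCommGroup frobeniusNormedRing frobeniusNormedAlgebra

lemma frobenius_norm_sq_eq_trace_mul_transpose (B : Matrix ι ι ℝ) :
    ‖B‖ ^ 2 = (B * Bᵀ).trace := by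
  rw [frobenius_norm_def, ← Real.rpow_natCast, ← Real.rpow_mul (by positivity)]
  norm_num [trace, mul_apply, sq]

lemma frobenius_norm_one_sq [DecidableEq ι] :
    ‖(1 : Matrix ι ι ℂ)‖ ^ 2 = Fintype.card ι := by
  simp [← coe_nnnorm, frobenius_nnnorm_one]

lemma spectralRadius_le_frobenius_nnnorm_mul [DecidableEq ι] (a : Matrix ι ι ℂ) :
    spectralRadius ℂ a ≤ ‖a‖₊ * ‖(1 : Matrix ι ι ℂ)‖₊ := by
  simpa using spectrum.spectralRadius_le_pow_nnnorm_pow_one_div ℂ a 0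

lemma spectralRadius_map_toReal_pow_two_mul_le [DecidableEq ι] [Nonempty ι]
    (A : Matrix ι ι ℝ) (j : ℕ) :
    (spectralRadius ℂ (A.map (algebraMap ℝ ℂ))).toReal ^ (2 * j) ≤
      Fintype.card ι * (A ^ j * (A ^ j)ᵀ).trace := by
  set a := A.map (algebraMap ℝ ℂ)
  have hpow : a ^ j = (A ^ j).map (algebraMap ℝ ℂ) := by
    simp only [a, ← RingHom.mapMatrix_apply, map_pow]
  have h : spectralRadius ℂ a ^ j ≤ ‖a ^ j‖₊ * ‖(1 : Matrix ι ι ℂ)‖₊ :=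
    (spectrum.spectralRadius_pow_le' a j).trans (spectralRadius_le_frobenius_nnnorm_mul _)
  have h' : (spectralRadius ℂ a).toReal ^ j ≤ ‖A ^ j‖ * ‖(1 : Matrix ι ι ℂ)‖ := by
    rw [hpow, frobenius_nnnorm_map_eq _ _ fun r => by simp] at h
    simpa using ENNReal.toReal_mono (ENNReal.mul_ne_top (by simp) (by simp)) h
  calc _ = ((spectralRadius ℂ a).toReal ^ j) ^ 2 := by ring
    _ ≤ (‖A ^ j‖ * ‖(1 : Matrix ι ι ℂ)‖) ^ 2 := by gcongr
    _ = _ := by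
      rw [mul_pow, frobenius_norm_sq_eq_trace_mul_transpose, frobenius_norm_one_sq, mul_comm]

end Frobenius

lemma mul_spectralRadius_pow_le_card_mul_trace [DecidableEq ι] [Nonempty ι] {c : ℝ}
    (hc : 0 ≤ c) {Q : Matrix ι ι ℝ} (hQ : c • 1 ≤ Q) (A : Matrix ι ι ℝ) (j : ℕ) :
    c * (spectralRadius ℂ (A.map (algebraMap ℝ ℂ))).toReal ^ (2 * j) ≤
      Fintype.card ι * (A ^ j * Q * (A ^ j)ᵀ).trace :=
  calc _ ≤ c * (Fintype.card ι * (A ^ j * (A ^ j)ᵀ).trace) := by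
        gcongr; exact spectralRadius_map_toReal_pow_two_mul_le A j
    _ = Fintype.card ι * (c * (A ^ j * (A ^ j)ᵀ).trace) := by ring
    _ ≤ _ := by gcongr; exact mul_trace_mul_transpose_le hQ _

lemma div_card_le_trace_lyapunovMap_iterate [DecidableEq ι] [Nonempty ι] {c p : ℝ}
    (hc : 0 ≤ c) (hp : 0 ≤ p) {Q A : Matrix ι ι ℝ} (hQ : c • 1 ≤ Q)
    (hAp : 1 ≤ (spectralRadius ℂ (A.map (algebraMap ℝ ℂ))).toReal ^ 2 * p) (j : ℕ) :
    c * p / Fintype.card ι ≤ ((lyapunovMap p A)^[j] (p • Q)).trace := by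
  set r := (spectralRadius ℂ (A.map (algebraMap ℝ ℂ))).toReal
  set n := Fintype.card ι
  have hn : (0 : ℝ) < n := by exact_mod_cast Fintype.card_pos
  calc c * p / n ≤ c * p / n * (r ^ 2 * p) ^ j :=
        le_mul_of_one_le_right (by positivity) (one_le_pow₀ hAp)
    _ = p ^ (j + 1) * (c * r ^ (2 * j)) / n := by ring
    _ ≤ p ^ (j + 1) * (n * (A ^ j * Q * (A ^ j)ᵀ).trace) / n := by
        gcongr p ^ (j + 1) * ?_ / _
        exact mul_spectralRadius_pow_le_card_mul_trace hc hQ A j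
    _ = _ := by
        rw [lyapunovMap_iterate, Matrix.mul_smul, Matrix.smul_mul, trace_smul, trace_smul]
        field_simp; ring

end Matrix

theorem stmt19_general (n : ℕ) (A Qw : Matrix (Fin n) (Fin n) ℝ) (p : ℝ)
    (hQ : Qw.PosDef)
    (P : ℕ → Matrix (Fin n) (Fin n) ℝ)
    (hPsd : ∀ k, (P k).PosSemidef)
    (hrec : ∀ k, (P (k + 1) - p • (A * P k * Aᵀ + Qw)).PosSemidef)
    (hbound : ∃ Mb : ℝ, ∀ᶠ K : ℕ in Filter.atTop,
      (1 / (K : ℝ)) * ∑ k ∈ Finset.range K, (P k).trace ≤ Mb) :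
    ((spectralRadius ℂ (A.map (algebraMap ℝ ℂ))).toReal) ^ 2 * p < 1 := by
  set r := (spectralRadius ℂ (A.map (algebraMap ℝ ℂ))).toReal
  cases isEmpty_or_nonempty (Fin n) with
  | inl _ => simp [r] -- a `0 × 0` matrix has empty spectrum, so `r = 0`
  | inr _ =>
  by_contra! hrp
  have hp : 0 < p := pos_of_mul_pos_right (zero_lt_one.trans_le hrp) (sq_nonneg r)
  obtain ⟨c, hc, hcQ⟩ := exists_pos_smul_one_le_of_posDef hQ
  have hP (k : ℕ) : ∑ j ∈ range k, (lyapunovMap p A)^[j] (p • Qw) ≤ P k :=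
    sum_range_iterate_le _ (lyapunovMap_monotone hp.le A) (hPsd 0).nonneg
      (fun k => by rw [le_iff, lyapunovMap_apply, ← smul_add]; exact hrec k) k
  have hterm (j : ℕ) : c * p / n ≤ ((lyapunovMap p A)^[j] (p • Qw)).trace := by
    simpa only [Fintype.card_fin] using div_card_le_trace_lyapunovMap_iterate hc.le hp.le hcQ hrp j
  have htrace (k : ℕ) : c * p / n * k ≤ (P k).trace :=
    calc c * p / n * k = ∑ j ∈ range k, c * p / n := by simp [mul_comm]
      _ ≤ ∑ j ∈ range k, ((lyapunovMap p A)^[j] (p • Qw)).trace :=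
          sum_le_sum fun j _ => hterm j
      _ = (∑ j ∈ range k, (lyapunovMap p A)^[j] (p • Qw)).trace := (trace_sum _ _).symm
      _ ≤ (P k).trace := trace_mono (hP k)
  obtain ⟨Mb, hMb⟩ := hbound
  have hn : (0 : ℝ) < n := by simpa using Fintype.card_pos (α := Fin n)
  have hunbounded := tendsto_average_atTop_of_linear_le (by positivity) htrace
  obtain ⟨K, hK_gt, hK_le⟩ := ((hunbounded.eventually_gt_atTop Mb).and hMb).exists
  linarith

/-- Necessity of `ρ(A)²·p < 1`: if the second-moment matrices `P k` of a system
that with probability `p` per slot evolves open-loop (`P (k+1) ⪰ p(A P k Aᵀ + Q_w)`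
in the PSD order) have a bounded time-averaged trace, and `Q_w ≻ 0`, `ρ(A) ≥ 1`,
then `ρ(A)² p < 1`, where `ρ(A)` is the complex spectral radius of `A`. -/
theorem stmt19 (n : ℕ) (A Qw : Matrix (Fin n) (Fin n) ℝ) (p : ℝ)
    (hp0 : 0 ≤ p) (hp1 : p ≤ 1)
    (hQ : Qw.PosDef)
    (hρ : 1 ≤ ((spectralRadius ℂ (A.map (algebraMap ℝ ℂ))).toReal))
    (P : ℕ → Matrix (Fin n) (Fin n) ℝ)
    (hPsd : ∀ k, (P k).PosSemidef)
    (hrec : ∀ k, (P (k + 1) - p • (A * P k * Aᵀ + Qw)).PosSemidef)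
    (hbound : ∃ Mb : ℝ, ∀ᶠ K : ℕ in Filter.atTop,
      (1 / (K : ℝ)) * ∑ k ∈ Finset.range K, (P k).trace ≤ Mb) :
    ((spectralRadius ℂ (A.map (algebraMap ℝ ℂ))).toReal) ^ 2 * p < 1 :=
  stmt19_general n A Qw p hQ P hPsd hrec hbound
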